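/- arXiv:0810.1691 — 4 statements merged into one kernel-verified Lean document; each statement's English description precedes it below -/
import Mathlib

section
/- Let L/K be a quadratic extension of number fields with nontrivial automorphism σ, and let E_K, E_L be the unit groups of their rings of integers. Then the natural map E_K/E_K³ → (E_L/E_L³)^σ is an isomorphism. -/
open NumberField

/-! The norm `N : E_L → E_K` does all the work. If `u = w³` with `w ∈ E_L`, then
`N(w)³ = N(u) = u^[L:K]`, and as `[L:K]` is prime to `3`, `u` is already a cube in `E_K`.
If `σ w = w c³`, then `N(w) = w · σ w = w² c³`, so `N(w)² = w (w c²)³` lies in the class of `w`. -/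

theorem exists_pow_eq_of_pow_eq_pow_of_coprime {G : Type*} [CommGroup G] {p d : ℕ}
    (hdp : d.Coprime p) {u n : G} (h : n ^ p = u ^ d) : ∃ v : G, v ^ p = u := by
  have hbezout : (d : ℤ) * d.gcdA p + p * d.gcdB p = 1 := by
    rw [← Nat.gcd_eq_gcd_ab, hdp.gcd_eq_one, Nat.cast_one]
  refine ⟨n ^ d.gcdA p * u ^ d.gcdB p, ?_⟩
  calc (n ^ d.gcdA p * u ^ d.gcdB p) ^ p
      = (n ^ p) ^ d.gcdA p * u ^ ((p : ℤ) * d.gcdB p) := by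
        rw [mul_pow, ← zpow_natCast, ← zpow_natCast, ← zpow_natCast, ← zpow_mul, ← zpow_mul,
          ← zpow_mul, mul_comm (d.gcdA p), mul_comm (d.gcdB p)]
    _ = u ^ ((d : ℤ) * d.gcdA p + p * d.gcdB p) := by
        rw [h, ← zpow_natCast, ← zpow_mul, zpow_add]
    _ = u := by rw [hbezout, zpow_one]

theorem Finset.univ_eq_pair_of_card_eq_two {α : Type*} [Fintype α] [DecidableEq α] {a b : α}
    (hab : a ≠ b) (h : Fintype.card α = 2) : (Finset.univ : Finset α) = {a, b} :=
  (Finset.eq_of_subset_of_card_le (Finset.subset_univ _)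
    (by rw [Finset.card_univ, h, Finset.card_pair hab])).symm

section

variable {K L : Type*} [Field K] [Field L] [Algebra K L]

theorem Algebra.algebraMap_norm_eq_mul_of_finrank_eq_two [IsGalois K L]
    (h2 : Module.finrank K L = 2) {σ : L ≃ₐ[K] L} (hσ : σ ≠ 1) (x : L) :
    algebraMap K L (Algebra.norm K x) = x * σ x := by
  classical
  have : FiniteDimensional K L := Module.finite_of_finrank_eq_succ h2
  have hcard : Fintype.card (L ≃ₐ[K] L) = 2 := by
    rw [← Nat.card_eq_fintype_card, IsGalois.card_aut_eq_finrank, h2]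
  rw [Algebra.norm_eq_prod_automorphisms, Finset.univ_eq_pair_of_card_eq_two hσ.symm hcard,
    Finset.prod_pair hσ.symm]
  rfl

namespace NumberField.RingOfIntegers

theorem exists_pow_eq_of_algebraMap_eq_pow {p : ℕ} (hp : (Module.finrank K L).Coprime p)
    (u : (𝓞 K)ˣ) (w : (𝓞 L)ˣ) (hw : (w : 𝓞 L) ^ p = algebraMap (𝓞 K) (𝓞 L) u) :
    ∃ v : (𝓞 K)ˣ, v ^ p = u := by
  refine exists_pow_eq_of_pow_eq_pow_of_coprime hp (n := Units.map (RingOfIntegers.norm K) w)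
    (Units.ext ?_)
  simp only [Units.val_pow_eq_pow_val, Units.coe_map, ← map_pow, hw,
    RingOfIntegers.norm_algebraMap]

theorem exists_algebraMap_eq_mul_pow_of_apply_eq_mul_pow [IsGalois K L]
    (h2 : Module.finrank K L = 2) {σ : L ≃ₐ[K] L} (hσ : σ ≠ 1) {p : ℕ} (hp : Odd p)
    (w c : (𝓞 L)ˣ) (hc : σ (algebraMap (𝓞 L) L w) = algebraMap (𝓞 L) L (w * c ^ p)) :
    ∃ u : (𝓞 K)ˣ, ∃ c' : (𝓞 L)ˣ, algebraMap K L (algebraMap (𝓞 K) K u)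
      = algebraMap (𝓞 L) L (w * c' ^ p) := by
  obtain ⟨k, rfl⟩ := hp
  refine ⟨Units.map (RingOfIntegers.norm K) w ^ (k + 1), w * c ^ (k + 1), ?_⟩
  simp only [Units.val_pow_eq_pow_val, Units.coe_map, Units.val_mul, map_pow,
    map_mul, ← RingOfIntegers.coe_eq_algebraMap, RingOfIntegers.coe_norm,
    Algebra.algebraMap_norm_eq_mul_of_finrank_eq_two h2 hσ, hc]
  ring

end NumberField.RingOfIntegers

end

theorem stmt_2_general (K L : Type*) [Field K] [Field L]
    [Algebra K L] [IsGalois K L] (h2 : Module.finrank K L = 2)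
    (σ : L ≃ₐ[K] L) (hσ : σ ≠ 1) :
    (∀ u : (𝓞 K)ˣ, (∃ w : (𝓞 L)ˣ,
        algebraMap (𝓞 L) L ((w : 𝓞 L) ^ 3) = algebraMap K L (algebraMap (𝓞 K) K (u : 𝓞 K))) →
      ∃ v : (𝓞 K)ˣ, v ^ 3 = u) ∧
    (∀ w : (𝓞 L)ˣ, (∃ c : (𝓞 L)ˣ,
        σ (algebraMap (𝓞 L) L (w : 𝓞 L)) = algebraMap (𝓞 L) L ((w : 𝓞 L) * (c : 𝓞 L) ^ 3)) →
      ∃ u : (𝓞 K)ˣ, ∃ c : (𝓞 L)ˣ,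
        algebraMap K L (algebraMap (𝓞 K) K (u : 𝓞 K))
          = algebraMap (𝓞 L) L ((w : 𝓞 L) * (c : 𝓞 L) ^ 3)) := by
  refine ⟨fun u ⟨w, hw⟩ => ?_, fun w ⟨c, hc⟩ => ?_⟩
  · refine RingOfIntegers.exists_pow_eq_of_algebraMap_eq_pow (by rw [h2]; norm_num) u w ?_
    exact FaithfulSMul.algebraMap_injective (𝓞 L) L hw
  · exact RingOfIntegers.exists_algebraMap_eq_mul_pow_of_apply_eq_mul_pow h2 hσ ⟨1, rfl⟩ w c hc

/-- For a quadratic extension L/K of number fields with nontrivial automorphism σ,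
the natural map E_K/E_K³ → (E_L/E_L³)^σ on unit groups of rings of integers is an
isomorphism: injective (a unit of K that is the cube of a unit of L is the cube of a
unit of K) and surjective onto σ-fixed classes. -/
theorem stmt_2 (K L : Type*) [Field K] [Field L] [NumberField K] [NumberField L]
    [Algebra K L] [IsGalois K L] (h2 : Module.finrank K L = 2)
    (σ : L ≃ₐ[K] L) (hσ : σ ≠ 1) :
    (∀ u : (𝓞 K)ˣ, (∃ w : (𝓞 L)ˣ,
        algebraMap (𝓞 L) L ((w : 𝓞 L) ^ 3) = algebraMap K L (algebraMap (𝓞 K) K (u : 𝓞 K))) →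
      ∃ v : (𝓞 K)ˣ, v ^ 3 = u) ∧
    (∀ w : (𝓞 L)ˣ, (∃ c : (𝓞 L)ˣ,
        σ (algebraMap (𝓞 L) L (w : 𝓞 L)) = algebraMap (𝓞 L) L ((w : 𝓞 L) * (c : 𝓞 L) ^ 3)) →
      ∃ u : (𝓞 K)ˣ, ∃ c : (𝓞 L)ˣ,
        algebraMap K L (algebraMap (𝓞 K) K (u : 𝓞 K))
          = algebraMap (𝓞 L) L ((w : 𝓞 L) * (c : 𝓞 L) ^ 3)) :=
  stmt_2_general K L h2 σ hσ
end

section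
/- Let K₁/K₀ be a Galois extension of fields of characteristic 0 such that K₁ contains no primitive cube root of unity. Then the natural map K₀×/(K₀×)³ → K₁×/(K₁×)³ is injective. -/
/-!
If `y ^ 3 = b` with `b ∈ K₀`, every automorphism `σ` of `K₁/K₀` sends `y` to another cube root
of `b`. Without nontrivial cube roots of unity in `K₁` cubing is injective, so `σ y = y`; and in a
Galois extension an element fixed by every automorphism lies in the base field.
-/

lemma pow_three_injective_of_sq_add_self_add_one_ne_zero {K : Type*} [Field K]
    (hζ : ∀ z : K, z ^ 2 + z + 1 ≠ 0) : Function.Injective (fun x : K ↦ x ^ 3) := by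
  intro x y hxy
  simp only at hxy
  rcases eq_or_ne y 0 with rfl | hy
  · simpa using hxy
  have hfactor : (x - y) * (y ^ 2 * ((x / y) ^ 2 + x / y + 1)) = 0 := by
    field_simp
    linear_combination hxy
  simpa [sub_eq_zero, hy, hζ] using hfactor

lemma exists_pow_eq_of_pow_injective {K₀ K₁ : Type*} [Field K₀] [Field K₁] [Algebra K₀ K₁]
    [IsGalois K₀ K₁] {n : ℕ} (hinj : Function.Injective (fun x : K₁ ↦ x ^ n)) {b : K₀} {y : K₁}
    (hy : y ^ n = algebraMap K₀ K₁ b) : ∃ z : K₀, z ^ n = b := by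
  have hfixed : ∀ σ : Gal(K₁/K₀), σ y = y := fun σ ↦
    hinj (by simp only [← map_pow, hy, AlgEquiv.commutes])
  obtain ⟨z, hz⟩ := (InfiniteGalois.mem_range_algebraMap_iff_fixed y).mpr hfixed
  exact ⟨z, (algebraMap K₀ K₁).injective (by rw [map_pow, hz, hy])⟩

theorem stmt_3_general (K₀ K₁ : Type*) [Field K₀] [Field K₁] [Algebra K₀ K₁]
    [IsGalois K₀ K₁] (hζ : ∀ z : K₁, z ^ 2 + z + 1 ≠ 0)
    (b : K₀) (y : K₁) (hy : y ^ 3 = algebraMap K₀ K₁ b) :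
    ∃ z : K₀, z ^ 3 = b :=
  exists_pow_eq_of_pow_injective (pow_three_injective_of_sq_add_self_add_one_ne_zero hζ) hy

/-- If K₁/K₀ is a Galois extension of characteristic-zero fields and K₁ contains no
primitive cube root of unity, then the map K₀×/(K₀×)³ → K₁×/(K₁×)³ is injective:
an element of K₀× that is a cube in K₁ is already a cube in K₀. -/
theorem stmt_3 (K₀ K₁ : Type*) [Field K₀] [Field K₁] [CharZero K₀] [Algebra K₀ K₁]
    [IsGalois K₀ K₁] (hζ : ∀ z : K₁, z ^ 2 + z + 1 ≠ 0)
    (b : K₀) (hb : b ≠ 0) (y : K₁) (hy : y ^ 3 = algebraMap K₀ K₁ b) :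
    ∃ z : K₀, z ^ 3 = b :=
  stmt_3_general K₀ K₁ hζ b y hy
end

section
/- Let p be a prime and N₁/N₀ a Galois extension of fields of characteristic ≠ p whose Galois group contains an element τ of order p. Let ε ∈ N₁× with N₁(ζ_p, ε^{1/p})/N₀ Galois. Then ε^{τ−1} = β^p for some β ∈ N₁, and τ extends to an element of Gal(N₁(ζ_p, ε^{1/p})/N₀) of order p if and only if β^{1+τ+⋯+τ^{p−1}} = 1. -/
/-!
Lift `τ` to `τ' ∈ Gal(N₂/N₀)` fixing `ζ` (a suitable power of any lift does this, as
`(p - 1)² ≡ 1 mod p`), and put `b = τ' r / r`, so that `b ^ p = τ ε / ε`. The group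
`H = Gal(N₂/N₁(ζ))` embeds into `μ_p` via `σ ↦ σ r / r`, so `|H|` divides `p`; `τ'` normalises
`H` and `τ' ^ p ∈ H`, so conjugation by `τ'` is an automorphism of `H` of order dividing both `p`
and `φ(|H|)`, hence trivial. Thus `τ'` commutes with `H`, `b` is fixed by `H` and lies in `N₁(ζ)`,
and since `[N₁(ζ) : N₁] < p` taking norms gives `β ∈ N₁` with `β ^ p = τ ε / ε`.
Writing `τ' r = c β r` with `c ^ p = 1` gives `τ' ^ p r = (β · τ β ⋯ τ^(p-1) β) r`; as every lift
of `τ` of order `p` fixes `ζ`, this yields the criterion.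
-/

open Polynomial IntermediateField

theorem IsPrimitiveRoot.finrank_adjoin_le_totient {K L : Type*} [Field K] [Field L] [Algebra K L]
    {ζ : L} {n : ℕ} (hζ : IsPrimitiveRoot ζ n) (hn : 0 < n) :
    Module.finrank K K⟮ζ⟯ ≤ n.totient := by
  rw [adjoin.finrank (hζ.isIntegral hn).tower_top, ← natDegree_cyclotomic n K]
  refine natDegree_le_of_dvd (minpoly.dvd K ζ ?_) (cyclotomic_ne_zero n K)
  simpa [aeval_def, eval₂_eq_eval_map] using hζ.isRoot_cyclotomic hn

theorem IsPrimitiveRoot.coprime_finrank_adjoin {K L : Type*} [Field K] [Field L] [Algebra K L]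
    {ζ : L} {p : ℕ} (hp : p.Prime) (hζ : IsPrimitiveRoot ζ p) :
    (Module.finrank K K⟮ζ⟯).Coprime p := by
  have : FiniteDimensional K K⟮ζ⟯ := adjoin.finiteDimensional (hζ.isIntegral hp.pos).tower_top
  have hle := hζ.finrank_adjoin_le_totient (K := K) hp.pos
  rw [Nat.totient_prime hp] at hle
  exact (hp.coprime_iff_not_dvd.mpr
    (Nat.not_dvd_of_pos_of_lt Module.finrank_pos (by have := hp.two_le; omega))).symm

theorem exists_pow_eq_of_pow_eq_algebraMap {K L : Type*} [Field K] [Field L] [Algebra K L]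
    {p : ℕ} (hcop : (Module.finrank K L).Coprime p) {q : K} {b : L}
    (hb : b ^ p = algebraMap K L q) : ∃ β, q = β ^ p := by
  have hnorm : q ^ Module.finrank K L = Algebra.norm K b ^ p := by
    rw [← Algebra.norm_algebraMap, ← hb, map_pow]
  obtain ⟨β, hβ, -⟩ := (pow_eq_pow_iff_of_coprime hcop).mp hnorm
  exact ⟨β, hβ⟩

theorem IsPrimitiveRoot.pow_apply_eq_self_of_sub_one_dvd {R S : Type*} [CommRing R] [Field S]
    [Algebra R S] {ζ : S} {p : ℕ} (hp : p.Prime) (hζ : IsPrimitiveRoot ζ p) (σ : S ≃ₐ[R] S)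
    {n : ℕ} (hn : p - 1 ∣ n) : (σ ^ n) ζ = ζ := by
  have : Fact p.Prime := ⟨hp⟩
  obtain ⟨m, rfl⟩ := hn
  rw [← hζ.autToPow_spec R, map_pow, pow_mul, ZMod.units_pow_card_sub_one_eq_one, one_pow,
    Units.val_one, ZMod.val_one, pow_one]

theorem pow_sub_one_sq_eq_self {M : Type*} [Monoid M] {p : ℕ} (hp : 2 ≤ p) {g : M}
    (hg : g ^ p = 1) : g ^ ((p - 1) ^ 2) = g := by
  obtain ⟨q, rfl⟩ : ∃ q, p = q + 2 := ⟨p - 2, by omega⟩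
  rw [show (q + 2 - 1) ^ 2 = (q + 2) * q + 1 by rw [show q + 2 - 1 = q + 1 by omega]; ring,
    pow_succ, pow_mul, hg, one_pow, one_mul]

theorem eq_of_eqOn_algebraMap_of_adjoin_eq_top {R A B : Type*} [CommRing R] [CommRing A]
    [Ring B] [Algebra R A] {s : Set A} (hs : Algebra.adjoin R s = ⊤) {f g : A →+* B}
    (hR : ∀ x, f (algebraMap R A x) = g (algebraMap R A x)) (hsfg : ∀ x ∈ s, f x = g x) :
    f = g := by
  ext x
  induction (show x ∈ Algebra.adjoin R s from hs ▸ Algebra.mem_top) using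
    Algebra.adjoin_induction with
  | mem x hx => exact hsfg x hx
  | algebraMap x => exact hR x
  | add x y _ _ hx hy => rw [map_add, map_add, hx, hy]
  | mul x y _ _ hx hy => rw [map_mul, map_mul, hx, hy]

theorem IsPrimitiveRoot.map_eq_self_of_pow_eq_one {R F : Type*} [CommRing R] [IsDomain R]
    [FunLike F R R] [MonoidHomClass F R R] {ζ : R} {p : ℕ} [NeZero p] (hζ : IsPrimitiveRoot ζ p)
    (σ : F) (hσ : σ ζ = ζ) {c : R} (hc : c ^ p = 1) : σ c = c := by
  obtain ⟨k, -, rfl⟩ := hζ.eq_pow_of_pow_eq_one hc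
  rw [map_pow, hσ]

theorem Subgroup.commute_of_mem_normalizer_of_card_dvd_prime {G : Type*} [Group G]
    {p : ℕ} (hp : p.Prime) {H : Subgroup G} (hH : Nat.card H ∣ p) {g : G}
    (hg : g ∈ normalizer (H : Set G)) (hgp : g ^ p ∈ H) {h : G} (hh : h ∈ H) :
    Commute g h := by
  have : Fact p.Prime := ⟨hp⟩
  have h2 := hp.two_le
  have : Finite H := Nat.finite_of_card_ne_zero (ne_zero_of_dvd_ne_zero hp.ne_zero hH)
  have : IsCyclic H := by
    rcases hp.eq_one_or_self_of_dvd _ hH with hH1 | hHp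
    · exact @isCyclic_of_subsingleton _ _ (Nat.card_eq_one_iff_unique.mp hH1).1
    · exact isCyclic_of_prime_card hHp
  let _ : CommGroup H := IsCyclic.commGroup
  set φ := H.normalizerMonoidHom ⟨g, hg⟩
  have hφp : φ ^ p = 1 := by
    ext x
    simp only [φ, ← map_pow, normalizerMonoidHom_apply_apply_coe, SubmonoidClass.mk_pow,
      MulAut.one_apply, mul_inv_eq_iff_eq_mul]
    exact congrArg Subtype.val (mul_comm (⟨g ^ p, hgp⟩ : H) x)
  have hφ : φ = 1 := by
    have hdvd : orderOf φ ∣ Nat.totient (Nat.card H) := by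
      rw [← IsCyclic.card_mulAut]; exact _root_.orderOf_dvd_natCard φ
    rcases hp.eq_one_or_self_of_dvd _ hH with hH1 | hHp
    · rw [hH1, Nat.totient_one, Nat.dvd_one, orderOf_eq_one_iff] at hdvd
      exact hdvd
    · rw [hHp, Nat.totient_prime hp] at hdvd
      refine orderOf_eq_one_iff.mp
        (Nat.eq_one_of_dvd_coprimes ?_ (orderOf_dvd_of_pow_eq_one hφp) hdvd)
      exact hp.coprime_iff_not_dvd.mpr (Nat.not_dvd_of_pos_of_lt (by omega) (by omega))
  have := congrArg (fun ψ : MulAut H => (ψ ⟨h, hh⟩ : G)) hφ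
  simpa [φ, mul_inv_eq_iff_eq_mul, Commute, SemiconjBy] using this

section Kummer

variable {N₀ N₁ N₂ : Type*} [Field N₀] [Field N₁] [Field N₂] [Algebra N₀ N₁] [Algebra N₁ N₂]
  [Algebra N₀ N₂] [IsScalarTower N₀ N₁ N₂] [Normal N₀ N₁]

theorem AlgEquiv.restrictNormalHom_eq_iff (σ : Gal(N₂/N₀)) (τ : Gal(N₁/N₀)) :
    restrictNormalHom N₁ σ = τ ↔ ∀ x, σ (algebraMap N₁ N₂ x) = algebraMap N₁ N₂ (τ x) := by
  refine ⟨fun h x => ?_, fun h => AlgEquiv.ext fun x => (algebraMap N₁ N₂).injective ?_⟩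
  · rw [← h]; exact (σ.restrictNormal_commutes N₁ x).symm
  · exact (σ.restrictNormal_commutes N₁ x).trans (h x)

theorem AlgEquiv.mem_ker_restrictNormalHom_iff (σ : Gal(N₂/N₀)) :
    σ ∈ (restrictNormalHom N₁).ker ↔ ∀ x, σ (algebraMap N₁ N₂ x) = algebraMap N₁ N₂ x := by
  rw [MonoidHom.mem_ker, restrictNormalHom_eq_iff]; rfl

theorem AlgEquiv.pow_apply_algebraMap {σ : Gal(N₂/N₀)} {τ : Gal(N₁/N₀)}
    (hσ : restrictNormalHom N₁ σ = τ) (n : ℕ) (x : N₁) :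
    (σ ^ n) (algebraMap N₁ N₂ x) = algebraMap N₁ N₂ ((τ ^ n) x) :=
  (restrictNormalHom_eq_iff _ _).mp (by rw [map_pow, hσ]) x

theorem exists_restrictNormalHom_eq_and_apply_eq_self [Normal N₀ N₂] {p : ℕ} (hp : p.Prime)
    {ζ : N₂} (hζ : IsPrimitiveRoot ζ p) {τ : Gal(N₁/N₀)} (hτ : τ ^ p = 1) :
    ∃ τ' : Gal(N₂/N₀), AlgEquiv.restrictNormalHom N₁ τ' = τ ∧ τ' ζ = ζ := by
  obtain ⟨τ₀, hτ₀⟩ := AlgEquiv.restrictNormalHom_surjective (K₁ := N₁) (E := N₂) τ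
  refine ⟨τ₀ ^ ((p - 1) ^ 2), ?_,
    hζ.pow_apply_eq_self_of_sub_one_dvd hp τ₀ (dvd_pow_self _ two_ne_zero)⟩
  rw [map_pow, hτ₀, pow_sub_one_sq_eq_self hp.two_le hτ]

theorem AlgEquiv.eq_one_of_mem_ker_of_apply_eq_self {ζ r : N₂}
    (hgen : Algebra.adjoin N₁ {ζ, r} = ⊤) {σ : Gal(N₂/N₀)}
    (hσ : σ ∈ (restrictNormalHom N₁).ker) (hσζ : σ ζ = ζ) (hσr : σ r = r) : σ = 1 := by
  have h : (σ : N₂ →+* N₂) = RingHom.id N₂ := by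
    refine eq_of_eqOn_algebraMap_of_adjoin_eq_top hgen
      ((mem_ker_restrictNormalHom_iff σ).mp hσ) ?_
    rintro x (rfl | rfl)
    exacts [hσζ, hσr]
  exact AlgEquiv.ext fun x => DFunLike.congr_fun h x

variable {p : ℕ} {ζ r : N₂} {ε : N₁}

theorem div_self_pow_eq_one_of_mem_ker (hr : r ^ p = algebraMap N₁ N₂ ε) (hr0 : r ≠ 0)
    {σ : Gal(N₂/N₀)} (hσ : σ ∈ (AlgEquiv.restrictNormalHom N₁).ker) : (σ r / r) ^ p = 1 := by
  rw [div_pow, ← map_pow, hr, (AlgEquiv.mem_ker_restrictNormalHom_iff σ).mp hσ,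
    div_self (by rw [← hr]; exact pow_ne_zero p hr0)]

theorem card_ker_inf_stabilizer_dvd [NeZero p] (hζ : IsPrimitiveRoot ζ p)
    (hr : r ^ p = algebraMap N₁ N₂ ε) (hr0 : r ≠ 0) (hgen : Algebra.adjoin N₁ {ζ, r} = ⊤) :
    Nat.card ((AlgEquiv.restrictNormalHom N₁).ker ⊓ MulAction.stabilizer Gal(N₂/N₀) ζ :
      Subgroup Gal(N₂/N₀)) ∣ p := by
  set H := (AlgEquiv.restrictNormalHom N₁).ker ⊓ MulAction.stabilizer Gal(N₂/N₀) ζ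
  have hroot (σ : H) : (σ.1 r / r) ^ p = 1 := div_self_pow_eq_one_of_mem_ker hr hr0 σ.2.1
  have hfix (σ : H) {c : N₂} (hc : c ^ p = 1) : σ.1 c = c :=
    hζ.map_eq_self_of_pow_eq_one _ σ.2.2 hc
  let χ : H →* rootsOfUnity p N₂ :=
    { toFun σ := ⟨Units.mk0 (σ.1 r / r) (div_ne_zero (by simpa using hr0) hr0),
        (mem_rootsOfUnity' _ _).mpr (hroot σ)⟩
      map_one' := by ext; simp [hr0]
      map_mul' σ σ' := by
        ext
        have hmul : σ.1 (σ'.1 r) = σ'.1 r / r * σ.1 r := by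
          rw [← hfix σ (hroot σ'), ← map_mul, div_mul_cancel₀ _ hr0]
        simp [hmul]
        ring }
  have hχ : Function.Injective χ := by
    rw [injective_iff_map_eq_one]
    intro σ hσ
    have hσr : σ.1 r = r := by
      simpa [χ, Units.ext_iff, div_eq_one_iff_eq hr0] using hσ
    exact Subtype.ext (AlgEquiv.eq_one_of_mem_ker_of_apply_eq_self hgen σ.2.1 σ.2.2 hσr)
  exact (Subgroup.card_dvd_of_injective χ hχ).trans (hζ.card_rootsOfUnity).dvd

theorem commute_of_mem_ker_of_apply_eq_self (hp : p.Prime) (hζ : IsPrimitiveRoot ζ p)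
    (hr : r ^ p = algebraMap N₁ N₂ ε) (hr0 : r ≠ 0) (hgen : Algebra.adjoin N₁ {ζ, r} = ⊤)
    {τ' : Gal(N₂/N₀)} (hτ'p : AlgEquiv.restrictNormalHom N₁ τ' ^ p = 1) (hτ'ζ : τ' ζ = ζ)
    {σ : Gal(N₂/N₀)} (hσ : σ ∈ (AlgEquiv.restrictNormalHom N₁).ker) (hσζ : σ ζ = ζ) :
    Commute τ' σ := by
  have : NeZero p := ⟨hp.ne_zero⟩
  refine Subgroup.commute_of_mem_normalizer_of_card_dvd_prime hp
    (card_ker_inf_stabilizer_dvd hζ hr hr0 hgen) (Subgroup.inf_normalizer_le_normalizer_inf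
      ⟨by rw [Subgroup.normalizer_eq_top]; exact Subgroup.mem_top τ',
        Subgroup.le_normalizer hτ'ζ⟩)
    ⟨MonoidHom.mem_ker.mpr (by rw [map_pow, hτ'p]), pow_mem hτ'ζ p⟩ ⟨hσ, hσζ⟩

theorem apply_div_self_eq_of_mem_ker (hp : p.Prime) (hζ : IsPrimitiveRoot ζ p)
    (hr : r ^ p = algebraMap N₁ N₂ ε) (hr0 : r ≠ 0) (hgen : Algebra.adjoin N₁ {ζ, r} = ⊤)
    {τ' : Gal(N₂/N₀)} (hτ'p : AlgEquiv.restrictNormalHom N₁ τ' ^ p = 1) (hτ'ζ : τ' ζ = ζ)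
    {σ : Gal(N₂/N₀)} (hσ : σ ∈ (AlgEquiv.restrictNormalHom N₁).ker) (hσζ : σ ζ = ζ) :
    σ (τ' r / r) = τ' r / r := by
  have : NeZero p := ⟨hp.ne_zero⟩
  set c := σ r / r
  have hσr : σ r = c * r := (div_mul_cancel₀ _ hr0).symm
  have hτ'c : τ' c = c := hζ.map_eq_self_of_pow_eq_one τ' hτ'ζ
    (div_self_pow_eq_one_of_mem_ker hr hr0 hσ)
  have hc0 : c ≠ 0 := div_ne_zero (by simpa using hr0) hr0
  have hcomm : σ (τ' r) = τ' (σ r) := DFunLike.congr_fun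
    (commute_of_mem_ker_of_apply_eq_self hp hζ hr hr0 hgen hτ'p hτ'ζ hσ hσζ).symm.eq r
  rw [map_div₀, hcomm, hσr, map_mul, hτ'c, mul_div_mul_left _ _ hc0]

theorem apply_div_self_mem_adjoin [IsGalois N₀ N₂] (hp : p.Prime) (hζ : IsPrimitiveRoot ζ p)
    (hr : r ^ p = algebraMap N₁ N₂ ε) (hr0 : r ≠ 0) (hgen : Algebra.adjoin N₁ {ζ, r} = ⊤)
    {τ' : Gal(N₂/N₀)} (hτ'p : AlgEquiv.restrictNormalHom N₁ τ' ^ p = 1) (hτ'ζ : τ' ζ = ζ) :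
    τ' r / r ∈ N₁⟮ζ⟯ := by
  classical
  have : Algebra.IsAlgebraic N₁ N₂ := Algebra.IsAlgebraic.tower_top (K := N₀) N₁
  have : Algebra.FiniteType N₁ N₂ := ⟨⟨{ζ, r}, by simpa using hgen⟩⟩
  have : FiniteDimensional N₁ N₂ := Algebra.IsIntegral.finite
  have : IsGalois N₁ N₂ := IsGalois.tower_top_of_isGalois N₀ N₁ N₂
  rw [← IsGalois.fixedField_fixingSubgroup N₁⟮ζ⟯, mem_fixedField_iff]
  intro σ hσ
  exact apply_div_self_eq_of_mem_ker (σ := σ.restrictScalars N₀) hp hζ hr hr0 hgen hτ'p hτ'ζ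
    ((AlgEquiv.mem_ker_restrictNormalHom_iff _).mpr σ.commutes)
    ((IntermediateField.mem_fixingSubgroup_iff _ _).mp hσ ζ (mem_adjoin_simple_self N₁ ζ))

theorem exists_apply_div_self_eq_pow [IsGalois N₀ N₂] (hp : p.Prime) (hζ : IsPrimitiveRoot ζ p)
    (hr : r ^ p = algebraMap N₁ N₂ ε) (hr0 : r ≠ 0) (hgen : Algebra.adjoin N₁ {ζ, r} = ⊤)
    {τ : Gal(N₁/N₀)} (hτ : τ ^ p = 1) : ∃ β : N₁, τ ε / ε = β ^ p := by
  obtain ⟨τ', hτ', hτ'ζ⟩ := exists_restrictNormalHom_eq_and_apply_eq_self hp hζ hτ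
  have hmem : τ' r / r ∈ N₁⟮ζ⟯ :=
    apply_div_self_mem_adjoin hp hζ hr hr0 hgen (by rw [hτ']; exact hτ) hτ'ζ
  have hpow : (τ' r / r) ^ p = algebraMap N₁ N₂ (τ ε / ε) := by
    rw [div_pow, ← map_pow, hr, (AlgEquiv.restrictNormalHom_eq_iff _ _).mp hτ' ε, map_div₀]
  have hcop : (Module.finrank N₁ N₁⟮ζ⟯).Coprime p := hζ.coprime_finrank_adjoin hp
  have hb : (⟨_, hmem⟩ : N₁⟮ζ⟯) ^ p = algebraMap N₁ N₁⟮ζ⟯ (τ ε / ε) := Subtype.ext hpow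
  exact exists_pow_eq_of_pow_eq_algebraMap hcop hb

theorem pow_apply_eq_prod_mul {τ' : Gal(N₂/N₀)} {τ : Gal(N₁/N₀)}
    (hτ' : AlgEquiv.restrictNormalHom N₁ τ' = τ) {c : N₂} (hc : τ' c = c) {β : N₁}
    (hτ'r : τ' r = c * algebraMap N₁ N₂ β * r) (n : ℕ) :
    (τ' ^ n) r = c ^ n * algebraMap N₁ N₂ (∏ i ∈ Finset.range n, (τ ^ i) β) * r := by
  induction n with
  | zero => simp
  | succ n ih =>
    have hcn : (τ' ^ n) c = c := pow_mem (show τ' ∈ MulAction.stabilizer _ c from hc) n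
    rw [pow_succ, AlgEquiv.mul_apply, hτ'r, map_mul, map_mul, hcn, ih,
      AlgEquiv.pow_apply_algebraMap hτ', Finset.prod_range_succ, map_mul]
    ring

theorem orderOf_eq_iff_prod_eq_one (hp : p.Prime) (hζ : IsPrimitiveRoot ζ p)
    (hr : r ^ p = algebraMap N₁ N₂ ε) (hr0 : r ≠ 0) (hgen : Algebra.adjoin N₁ {ζ, r} = ⊤)
    {τ : Gal(N₁/N₀)} (hτ : orderOf τ = p) {β : N₁} (hβ : τ ε / ε = β ^ p)
    {τ' : Gal(N₂/N₀)} (hτ' : AlgEquiv.restrictNormalHom N₁ τ' = τ) (hτ'ζ : τ' ζ = ζ) :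
    orderOf τ' = p ↔ ∏ i ∈ Finset.range p, (τ ^ i) β = 1 := by
  have : Fact p.Prime := ⟨hp⟩
  have hε : ε ≠ 0 := by
    rintro rfl
    exact pow_ne_zero p hr0 (by rw [hr, map_zero])
  have hβ0 : algebraMap N₁ N₂ β ≠ 0 := by
    refine (_root_.map_ne_zero _).mpr fun h => ?_
    rw [h, zero_pow hp.ne_zero, div_eq_zero_iff] at hβ
    simp [hε] at hβ
  set c := τ' r / (algebraMap N₁ N₂ β * r)
  have hc : c ^ p = 1 := by
    rw [div_pow, mul_pow, ← map_pow τ', hr, (AlgEquiv.restrictNormalHom_eq_iff _ _).mp hτ' ε,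
      ← map_pow, ← hβ, ← map_mul, div_mul_cancel₀ _ hε, div_self]
    simpa using hε
  have hτ'r : τ' r = c * algebraMap N₁ N₂ β * r := by
    rw [mul_assoc, div_mul_cancel₀ _ (mul_ne_zero hβ0 hr0)]
  have hpow := pow_apply_eq_prod_mul hτ' (hζ.map_eq_self_of_pow_eq_one τ' hτ'ζ hc) hτ'r p
  rw [hc, one_mul] at hpow
  have hτ'1 : τ' ≠ 1 := by
    rintro rfl
    rw [map_one] at hτ'
    simp [← hτ', hp.one_lt.ne] at hτ
  rw [orderOf_eq_prime_iff, and_iff_left hτ'1]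
  constructor
  · intro h
    rw [h, AlgEquiv.one_apply, eq_comm, mul_eq_right₀ hr0] at hpow
    exact (algebraMap N₁ N₂).injective (hpow.trans (map_one _).symm)
  · intro h
    refine AlgEquiv.eq_one_of_mem_ker_of_apply_eq_self hgen ?_
      (pow_mem (show τ' ∈ MulAction.stabilizer _ ζ from hτ'ζ) p)
      (by rw [hpow, h, map_one, one_mul])
    rw [MonoidHom.mem_ker, map_pow, hτ', ← hτ, pow_orderOf_eq_one]

end Kummer

theorem stmt_8_general (p : ℕ) (hp : p.Prime)
    (N₀ N₁ N₂ : Type*) [Field N₀] [Field N₁] [Field N₂]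
    [Algebra N₀ N₁] [Algebra N₁ N₂] [Algebra N₀ N₂] [IsScalarTower N₀ N₁ N₂]
    [IsGalois N₀ N₁] [IsGalois N₀ N₂]
    (τ : N₁ ≃ₐ[N₀] N₁) (hτ : orderOf τ = p)
    (ε : N₁) (hε : ε ≠ 0)
    (ζ r : N₂) (hζ : IsPrimitiveRoot ζ p) (hr : r ^ p = algebraMap N₁ N₂ ε)
    (hgen : Algebra.adjoin N₁ ({ζ, r} : Set N₂) = ⊤) :
    ∃ β : N₁, τ ε / ε = β ^ p ∧
      ((∃ τ' : N₂ ≃ₐ[N₀] N₂, orderOf τ' = p ∧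
          ∀ x : N₁, τ' (algebraMap N₁ N₂ x) = algebraMap N₁ N₂ (τ x)) ↔
        ∏ i ∈ Finset.range p, (τ ^ i) β = 1) := by
  have hr0 : r ≠ 0 := by
    rintro rfl
    rw [zero_pow hp.ne_zero, eq_comm, map_eq_zero] at hr
    exact hε hr
  have hτp : τ ^ p = 1 := hτ ▸ pow_orderOf_eq_one τ
  obtain ⟨β, hβ⟩ := exists_apply_div_self_eq_pow hp hζ hr hr0 hgen hτp
  refine ⟨β, hβ, ⟨fun ⟨τ', hτ'p, hτ'⟩ => ?_, fun hprod => ?_⟩⟩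
  · have hτ'ζ : τ' ζ = ζ := by
      rw [← pow_sub_one_sq_eq_self hp.two_le (hτ'p ▸ pow_orderOf_eq_one τ' : τ' ^ p = 1)]
      exact hζ.pow_apply_eq_self_of_sub_one_dvd hp τ' (dvd_pow_self _ two_ne_zero)
    exact (orderOf_eq_iff_prod_eq_one hp hζ hr hr0 hgen hτ hβ
      ((AlgEquiv.restrictNormalHom_eq_iff _ _).mpr hτ') hτ'ζ).mp hτ'p
  · obtain ⟨τ', hτ', hτ'ζ⟩ := exists_restrictNormalHom_eq_and_apply_eq_self hp hζ hτp
    exact ⟨τ', (orderOf_eq_iff_prod_eq_one hp hζ hr hr0 hgen hτ hβ hτ' hτ'ζ).mpr hprod,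
      (AlgEquiv.restrictNormalHom_eq_iff _ _).mp hτ'⟩

/-- Let p be a prime, N₁/N₀ a Galois extension of fields of characteristic ≠ p whose
Galois group contains an element τ of order p, and ε ∈ N₁× such that
N₂ = N₁(ζ_p, ε^{1/p}) is Galois over N₀. Then τ(ε)/ε = β^p for some β ∈ N₁, and τ
extends to an element of Gal(N₂/N₀) of order p iff β^{1+τ+⋯+τ^{p−1}} = 1. -/
theorem stmt_8 (p : ℕ) (hp : p.Prime)
    (N₀ N₁ N₂ : Type*) [Field N₀] [Field N₁] [Field N₂]
    [Algebra N₀ N₁] [Algebra N₁ N₂] [Algebra N₀ N₂] [IsScalarTower N₀ N₁ N₂]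
    (hchar : (p : N₀) ≠ 0) [IsGalois N₀ N₁] [IsGalois N₀ N₂]
    (τ : N₁ ≃ₐ[N₀] N₁) (hτ : orderOf τ = p)
    (ε : N₁) (hε : ε ≠ 0)
    (ζ r : N₂) (hζ : IsPrimitiveRoot ζ p) (hr : r ^ p = algebraMap N₁ N₂ ε)
    (hgen : Algebra.adjoin N₁ ({ζ, r} : Set N₂) = ⊤) :
    ∃ β : N₁, τ ε / ε = β ^ p ∧
      ((∃ τ' : N₂ ≃ₐ[N₀] N₂, orderOf τ' = p ∧
          ∀ x : N₁, τ' (algebraMap N₁ N₂ x) = algebraMap N₁ N₂ (τ x)) ↔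
        ∏ i ∈ Finset.range p, (τ ^ i) β = 1) :=
  stmt_8_general p hp N₀ N₁ N₂ τ hτ ε hε ζ r hζ hr hgen
end

section
/- Let π = 1 − ζ₉ in Z₃[ζ₉] and let a, b ∈ Z₃. Then (1 + aπ + bπ² + O(π³))³ ≡ 1 + aπ³ + bπ⁶ − aπ⁷ − (a² + b)π⁸ (mod π⁹). In particular, every cube of a unit congruent to 1 mod π is congruent mod π³ to 1. -/
noncomputable section
abbrev K9 := CyclotomicField 9 ℚ_[3]
instance : Algebra ℤ_[3] K9 := ((algebraMap ℚ_[3] K9).comp (algebraMap ℤ_[3] ℚ_[3])).toAlgebra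
abbrev R9 := integralClosure ℤ_[3] K9

/-!
Write π = 1 − ζ. The relation Φ₉(ζ) = 0 reads 3 + π⁶ = 3π(3(1 − 2π) + π²(7 − 5π + 2π²)); bootstrapping
it gives π⁶ ∣ 3 and then π⁹ ∣ 3 + π⁶, i.e. 3 ≡ −π⁶ (mod π⁹). With X = aπ + bπ² + t we have
(1 + X)³ = 1 + 3X(1 + X) + X³: the middle term is ≡ −π⁶(aπ + (a² + b)π²), and X³ ≡ (a + bπ³)π³
(mod π⁹) because cubing is additive modulo 3 ∣ π⁶ and x³ ≡ x (mod 3) on ℤ₃.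
-/

theorem PadicInt.dvd_pow_sub_self {p : ℕ} [Fact p.Prime] (x : ℤ_[p]) : (p : ℤ_[p]) ∣ x ^ p - x := by
  have hker : x ^ p - x ∈ RingHom.ker (PadicInt.toZMod (p := p)) := by
    rw [RingHom.mem_ker, map_sub, map_pow, ZMod.pow_card, sub_self]
  rwa [PadicInt.ker_toZMod, PadicInt.maximalIdeal_eq_span_p, Ideal.mem_span_singleton] at hker

theorem IsPrimitiveRoot.pow_six_add_pow_three_add_one {R : Type*} [CommRing R] [IsDomain R] {ζ : R}
    (h : IsPrimitiveRoot ζ 9) : ζ ^ 6 + ζ ^ 3 + 1 = 0 := by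
  have hprod : (ζ ^ 3 - 1) * (ζ ^ 6 + ζ ^ 3 + 1) = 0 := by
    linear_combination h.pow_eq_one
  refine (mul_eq_zero.mp hprod).resolve_left fun h3 => ?_
  exact h.pow_ne_one_of_pos_of_lt (by norm_num) (by norm_num) (sub_eq_zero.mp h3)

section CubeCongruence

variable {R : Type*} [CommRing R] {π : R}

theorem pow_three_dvd_pow_three_sub_one (h3 : π ^ 2 ∣ 3) {u : R} (hu : π ∣ u - 1) :
    π ^ 3 ∣ u ^ 3 - 1 := by
  obtain ⟨v, hv⟩ := hu
  have hexp : u ^ 3 - 1 = 3 * π * (v * u) + π ^ 3 * v ^ 3 := by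
    rw [show u = 1 + π * v by linear_combination hv]; ring
  rw [hexp, pow_succ]
  exact dvd_add (dvd_mul_of_dvd_left (mul_dvd_mul h3 dvd_rfl) _) (dvd_mul_right _ _)

theorem pow_six_dvd_cube_sub (h6 : π ^ 6 ∣ 3) {A B : R} (hA : 3 ∣ A ^ 3 - A) (hB : 3 ∣ B ^ 3 - B)
    (s : R) : π ^ 6 ∣ (A + B * π + π ^ 2 * s) ^ 3 - A - B * π ^ 3 := by
  have hexp : (A + B * π + π ^ 2 * s) ^ 3 - A - B * π ^ 3 = (A ^ 3 - A) + π ^ 3 * (B ^ 3 - B)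
      + π ^ 6 * s ^ 3 + 3 * (A * (B * π + π ^ 2 * s) * (A + B * π + π ^ 2 * s)
        + π ^ 4 * B * s * (B + π * s)) := by ring
  rw [hexp]
  exact dvd_add (dvd_add (dvd_add (h6.trans hA) (dvd_mul_of_dvd_right (h6.trans hB) _))
    (dvd_mul_right _ _)) (dvd_mul_of_dvd_left h6 _)

theorem pow_nine_dvd_cube_sub (h : π ^ 9 ∣ 3 + π ^ 6) {A B : R} (hA : 3 ∣ A ^ 3 - A)
    (hB : 3 ∣ B ^ 3 - B) {t : R} (ht : π ^ 3 ∣ t) :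
    π ^ 9 ∣ (1 + A * π + B * π ^ 2 + t) ^ 3
      - (1 + A * π ^ 3 + B * π ^ 6 - A * π ^ 7 - (A ^ 2 + B) * π ^ 8) := by
  obtain ⟨s, rfl⟩ := ht
  have h6 : π ^ 6 ∣ 3 := by
    simpa using dvd_sub ((pow_dvd_pow π (by norm_num : 6 ≤ 9)).trans h) (dvd_refl (π ^ 6))
  set W := A + B * π + π ^ 2 * s with hW
  have hexp : (1 + A * π + B * π ^ 2 + π ^ 3 * s) ^ 3
      - (1 + A * π ^ 3 + B * π ^ 6 - A * π ^ 7 - (A ^ 2 + B) * π ^ 8)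
      = (3 + π ^ 6) * (π * W * (1 + π * W))
        - π ^ 6 * (π ^ 3 * (s + (B + π * s) * (W + A)))
        + π ^ 3 * (W ^ 3 - A - B * π ^ 3) := by rw [hW]; ring
  rw [hexp]
  refine dvd_add (dvd_sub (dvd_mul_of_dvd_left h _) ?_) ?_
  · rw [← mul_assoc, ← pow_add]; exact dvd_mul_right _ _
  · rw [show π ^ 9 = π ^ 3 * π ^ 6 by ring]
    exact mul_dvd_mul_left _ (pow_six_dvd_cube_sub h6 hA hB s)

end CubeCongruence

section NinthCyclotomic

variable {R : Type*} [CommRing R] {z : R}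

theorem three_add_one_sub_pow_six (hz : z ^ 6 + z ^ 3 + 1 = 0) :
    3 + (1 - z) ^ 6 = 3 * (1 - z) * (3 * (1 - 2 * (1 - z))
      + (1 - z) ^ 2 * (7 - 5 * (1 - z) + 2 * (1 - z) ^ 2)) := by
  linear_combination hz

theorem one_sub_pow_dvd_three (hz : z ^ 6 + z ^ 3 + 1 = 0) {k : ℕ} (hk : k ≤ 6) :
    (1 - z) ^ k ∣ 3 := by
  induction k with
  | zero => simp
  | succ k ih =>
    rw [eq_sub_of_add_eq (three_add_one_sub_pow_six hz)]
    refine dvd_sub ?_ (pow_dvd_pow _ hk)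
    rw [pow_succ]
    exact dvd_mul_of_dvd_left (mul_dvd_mul (ih (by omega)) dvd_rfl) _

theorem one_sub_pow_nine_dvd_three_add (hz : z ^ 6 + z ^ 3 + 1 = 0) :
    (1 - z) ^ 9 ∣ 3 + (1 - z) ^ 6 := by
  have h2 := one_sub_pow_dvd_three hz (k := 2) (by norm_num)
  rw [three_add_one_sub_pow_six hz, show 9 = 6 + 1 + 2 by rfl, pow_add, pow_add, pow_one]
  refine mul_dvd_mul (mul_dvd_mul (one_sub_pow_dvd_three hz le_rfl) (dvd_refl _)) ?_
  exact dvd_add (dvd_mul_of_dvd_left h2 _) (dvd_mul_right _ _)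

end NinthCyclotomic

/-- (1 + aπ + bπ² + O(π³))³ ≡ 1 + aπ³ + bπ⁶ − aπ⁷ − (a²+b)π⁸ (mod π⁹) for a, b ∈ Z₃;
in particular the cube of any element ≡ 1 mod π is ≡ 1 mod π³. -/
theorem stmt_11 (ζ : R9) (h : IsPrimitiveRoot ζ 9) (a b : ℤ_[3]) (t : R9)
    (ht : (1 - ζ) ^ 3 ∣ t) :
    (1 - ζ) ^ 9 ∣
      ((1 + algebraMap ℤ_[3] R9 a * (1 - ζ) + algebraMap ℤ_[3] R9 b * (1 - ζ) ^ 2 + t) ^ 3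
        - (1 + algebraMap ℤ_[3] R9 a * (1 - ζ) ^ 3 + algebraMap ℤ_[3] R9 b * (1 - ζ) ^ 6
            - algebraMap ℤ_[3] R9 a * (1 - ζ) ^ 7
            - algebraMap ℤ_[3] R9 (a ^ 2 + b) * (1 - ζ) ^ 8)) ∧
    ∀ u : R9, (1 - ζ) ∣ (u - 1) → (1 - ζ) ^ 3 ∣ (u ^ 3 - 1) := by
  have hz := h.pow_six_add_pow_three_add_one
  have hcube (x : ℤ_[3]) : (3 : R9) ∣ algebraMap ℤ_[3] R9 x ^ 3 - algebraMap ℤ_[3] R9 x := by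
    have := map_dvd (algebraMap ℤ_[3] R9) (PadicInt.dvd_pow_sub_self x)
    rwa [map_natCast, map_sub, map_pow, Nat.cast_ofNat] at this
  refine ⟨?_, fun u => pow_three_dvd_pow_three_sub_one (one_sub_pow_dvd_three hz (by norm_num))⟩
  rw [map_add, map_pow]
  exact pow_nine_dvd_cube_sub (one_sub_pow_nine_dvd_three_add hz) (hcube a) (hcube b) ht
end
end
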